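/- arXiv:0805.1842 — 6 statements merged into one kernel-verified Lean document; each statement's English description precedes it below -/
import Mathlib

section
/- Let Γ be a finite connected graph without loops, with vertex set V, edge multiplicities e_{ij} ∈ ℕ between distinct vertices, and integer weights q_i on vertices. Suppose (n, e) ∈ ℕ^V × (ℕ₊)^V satisfies e_i n_i = q_i + Σ_{j≠i} e_{ij} n_j for all i ∈ V, and the quadratic form Q(x) = Σ_i x_i(−e_i x_i + Σ_{j≠i} e_{ij} x_j) is negative definite. Then the set of vectors n ∈ ℕ^V that can be extended to such a solution (n, e) is finite. -/
/-!
If `(a, e)` and `(b, e')` are two solutions with `a ≤ b` and `e ≤ e'` componentwise, then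
`x = b - a ≥ 0` satisfies `(M_{e'} x)_i = (e'_i - e_i) a_i ≥ 0`, where `M_e` is the intersection
matrix, so `Q_{e'}(x) ≥ 0` and negative definiteness forces `a = b`. By Dickson's lemma on the
pairs `(n, e) ∈ ℕ^V × ℕ^V`, every infinite family of solutions contains such a comparable pair.
-/

open Finset

/-- `(M_e x)_i` for the intersection matrix `M_e` with diagonal `-e` and off-diagonal entries `w`;
the quadratic form is `Q_e(x) = ∑ i, x i * intersectionMulVec w e x i`. -/
def intersectionMulVec {V : Type*} [Fintype V] [DecidableEq V]
    (w : V → V → ℝ) (e x : V → ℝ) (i : V) : ℝ :=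
  -e i * x i + ∑ j ∈ univ.erase i, w i j * x j

section IntersectionForm

variable {V : Type*} [Fintype V] [DecidableEq V] {w : V → V → ℝ}

theorem intersectionMulVec_sub_of_eq {a b e e' : V → ℝ}
    (h : intersectionMulVec w e a = intersectionMulVec w e' b) (i : V) :
    intersectionMulVec w e' (b - a) i = (e' i - e i) * a i := by
  have hi := congrFun h i
  simp only [intersectionMulVec, Pi.sub_apply, mul_sub, sum_sub_distrib] at hi ⊢
  linarith

theorem sum_mul_intersectionMulVec_sub_nonneg {a b e e' : V → ℝ}
    (ha : 0 ≤ a) (hab : a ≤ b) (he : e ≤ e')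
    (h : intersectionMulVec w e a = intersectionMulVec w e' b) :
    0 ≤ ∑ i, (b - a) i * intersectionMulVec w e' (b - a) i := by
  refine sum_nonneg fun i _ => ?_
  rw [intersectionMulVec_sub_of_eq h]
  have hx : 0 ≤ b i - a i := sub_nonneg.2 (hab i)
  have hε : 0 ≤ e' i - e i := sub_nonneg.2 (he i)
  exact mul_nonneg hx (mul_nonneg hε (ha i))

theorem eq_of_le_of_intersectionMulVec_eq {a b e e' : V → ℝ}
    (ha : 0 ≤ a) (hab : a ≤ b) (he : e ≤ e')
    (hneg : ∀ x : V → ℝ, x ≠ 0 → ∑ i, x i * intersectionMulVec w e' x i < 0)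
    (h : intersectionMulVec w e a = intersectionMulVec w e' b) : a = b := by
  by_contra hne
  have hx : b - a ≠ 0 := sub_ne_zero.2 (Ne.symm hne)
  exact (hneg _ hx).not_ge (sum_mul_intersectionMulVec_sub_nonneg ha hab he h)

end IntersectionForm

theorem intersectionMulVec_natCast_eq_neg {V : Type*} [Fintype V] [DecidableEq V]
    {w : V → V → ℕ} {e n : V → ℕ} {q : ℤ} {i : V}
    (h : (e i : ℤ) * n i = q + ∑ j ∈ univ.erase i, (w i j : ℤ) * n j) :
    intersectionMulVec (fun i j => (w i j : ℝ)) (fun i => (e i : ℝ)) (fun i => (n i : ℝ)) i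
      = -q := by
  have h' : (e i : ℝ) * n i = q + ∑ j ∈ univ.erase i, (w i j : ℝ) * n j := by exact_mod_cast h
  simp only [intersectionMulVec]
  linarith

theorem Set.finite_of_forall_le_imp_eq {α β : Type*} [Preorder β] [WellQuasiOrderedLE β]
    {s : Set α} (g : α → β) (h : ∀ a ∈ s, ∀ b ∈ s, g a ≤ g b → a = b) : s.Finite := by
  have hinj : Set.InjOn g s := fun a ha b hb hg => h a ha b hb hg.le
  refine Set.Finite.of_finite_image ?_ hinj
  refine WellQuasiOrderedLE.finite_of_isAntichain ?_
  rintro _ ⟨a, ha, rfl⟩ _ ⟨b, hb, rfl⟩ hne hle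
  exact hne (congrArg g (h a ha b hb hle))

theorem stmt_0_general {V : Type*} [Fintype V] [DecidableEq V]
    (w : V → V → ℕ)
    (q : V → ℤ) :
    {n : V → ℕ | ∃ e : V → ℕ, (∀ i, 1 ≤ e i) ∧
      (∀ i, (e i : ℤ) * n i = q i + ∑ j ∈ univ.erase i, (w i j : ℤ) * n j) ∧
      (∀ x : V → ℝ, x ≠ 0 →
        ∑ i, x i * (-(e i : ℝ) * x i + ∑ j ∈ univ.erase i, (w i j : ℝ) * x j) < 0)}.Finite := by
  set S := {n : V → ℕ | _}
  choose! E hE using fun n (hn : n ∈ S) => hn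
  refine Set.finite_of_forall_le_imp_eq (fun n => (n, E n)) fun a ha b hb hle => ?_
  obtain ⟨-, hqa, -⟩ := hE a ha
  obtain ⟨-, hqb, hnegb⟩ := hE b hb
  have hM : intersectionMulVec (fun i j => (w i j : ℝ)) (fun i => (E a i : ℝ)) (fun i => (a i : ℝ))
      = intersectionMulVec (fun i j => (w i j : ℝ)) (fun i => (E b i : ℝ)) (fun i => b i) :=
    funext fun i => by
      rw [intersectionMulVec_natCast_eq_neg (hqa i), intersectionMulVec_natCast_eq_neg (hqb i)]
  have hab := eq_of_le_of_intersectionMulVec_eq (fun i => Nat.cast_nonneg (a i))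
    (fun i => Nat.cast_le.2 (hle.1 i)) (fun i => Nat.cast_le.2 (hle.2 i)) hnegb hM
  exact funext fun i => by exact_mod_cast congrFun hab i

/-- For a finite connected loopless graph with edge multiplicities `w` and integer
weights `q`, the set of vectors `n : V → ℕ` extendable to a solution `(n, e)` of the
adjunction system `e i * n i = q i + ∑_{j ≠ i} w i j * n j` with negative definite
intersection form is finite. -/
theorem stmt_0 {V : Type*} [Fintype V] [DecidableEq V]
    (w : V → V → ℕ) (hsymm : ∀ i j, w i j = w j i) (hdiag : ∀ i, w i i = 0)
    (hconn : (SimpleGraph.fromRel (fun i j => 0 < w i j)).Connected)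
    (q : V → ℤ) :
    {n : V → ℕ | ∃ e : V → ℕ, (∀ i, 1 ≤ e i) ∧
      (∀ i, (e i : ℤ) * n i = q i + ∑ j ∈ univ.erase i, (w i j : ℤ) * n j) ∧
      (∀ x : V → ℝ, x ≠ 0 →
        ∑ i, x i * (-(e i : ℝ) * x i + ∑ j ∈ univ.erase i, (w i j : ℝ) * x j) < 0)}.Finite :=
  stmt_0_general w q
end

section
/- With the setup of the adjunction system e_i n_i = q_i + Σ_{j≠i} e_{ij} n_j with negative definite intersection form: if a vertex i satisfies n_i ≠ 0 for every solution (n, e) of the system, then e_i takes only finitely many values among all solutions. -/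
/-!
By Dickson's lemma the weight vectors `e` of all solutions lie in the upward cones of finitely
many of them. Raising `e` only lowers `Q_e`, so on the cone over `f` we have
`Q_e x ≤ Q_f x ≤ -c ‖x‖²` with `c > 0` depending only on `f`. At a solution, `Q_e n = -∑ q_j n_j`,
hence `c ‖n‖² ≤ (∑ |q_j|) ‖n‖` bounds `n` on the cone, and `n_i ≥ 1` then bounds
`e_i ≤ e_i n_i = q_i + ∑_k e_{ik} n_k`.
-/

open Finset

theorem WellQuasiOrderedLE.exists_finite_subset_forall_exists_le {α : Type*} [PartialOrder α]
    [WellQuasiOrderedLE α] (s : Set α) : ∃ t ⊆ s, t.Finite ∧ ∀ a ∈ s, ∃ b ∈ t, b ≤ a := by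
  refine ⟨{x | Minimal (· ∈ s) x}, fun _ hx => hx.prop,
    WellQuasiOrderedLE.finite_of_isAntichain (setOfPred_minimal_antichain _), fun a ha => ?_⟩
  obtain ⟨b, hba, hb⟩ := (Set.isPWO_of_wellQuasiOrderedLE s).exists_le_minimal ha
  exact ⟨b, hb, hba⟩

theorem exists_pos_mul_sq_norm_le {E : Type*} [NormedAddCommGroup E] [NormedSpace ℝ E]
    [FiniteDimensional ℝ E] (f : E → ℝ) (hf : Continuous f)
    (hsmul : ∀ (c : ℝ) x, f (c • x) = c ^ 2 * f x) (hpos : ∀ x, x ≠ 0 → 0 < f x) :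
    ∃ c > 0, ∀ x, c * ‖x‖ ^ 2 ≤ f x := by
  rcases subsingleton_or_nontrivial E with hE | hE
  · exact ⟨1, one_pos, fun x => by simpa [Subsingleton.elim x 0] using (hsmul 0 0).ge⟩
  obtain ⟨x₀, hx₀, hmin⟩ := (isCompact_sphere (0 : E) 1).exists_isMinOn
    (NormedSpace.sphere_nonempty.mpr zero_le_one) hf.continuousOn
  have hx₀ : ‖x₀‖ = 1 := by simpa using hx₀
  refine ⟨f x₀, hpos x₀ (norm_ne_zero_iff.mp (by simp [hx₀])), fun x => ?_⟩
  rcases eq_or_ne x 0 with rfl | hx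
  · simpa using (hsmul 0 0).ge
  have hxn : ‖x‖ ≠ 0 := norm_ne_zero_iff.mpr hx
  have hle : f x₀ ≤ f (‖x‖⁻¹ • x) := hmin (by simp [norm_smul, hxn])
  calc f x₀ * ‖x‖ ^ 2 ≤ f (‖x‖⁻¹ • x) * ‖x‖ ^ 2 := by gcongr
    _ = f x := by rw [hsmul]; field_simp

theorem sum_mul_le_sum_abs_mul_norm {V : Type*} [Fintype V] (q : V → ℝ) {x : V → ℝ} (hx : 0 ≤ x) :
    ∑ j, q j * x j ≤ (∑ j, |q j|) * ‖x‖ := by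
  rw [sum_mul]
  refine sum_le_sum fun j _ => ?_
  have hxj : x j ≤ ‖x‖ := (le_abs_self _).trans (norm_le_pi_norm x j)
  calc q j * x j ≤ |q j| * x j := mul_le_mul_of_nonneg_right (le_abs_self _) (hx j)
    _ ≤ |q j| * ‖x‖ := mul_le_mul_of_nonneg_left hxj (abs_nonneg _)

section AdjunctionSystem

variable {V : Type*} [Fintype V] [DecidableEq V] (w : V → V → ℕ)

def intersectionForm (e : V → ℕ) (x : V → ℝ) : ℝ :=
  ∑ j, x j * (-(e j : ℝ) * x j + ∑ k ∈ univ.erase j, (w j k : ℝ) * x k)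

def IsAdjunctionSolution (q : V → ℤ) (n e : V → ℕ) : Prop :=
  ∀ j, (e j : ℤ) * n j = q j + ∑ k ∈ univ.erase j, (w j k : ℤ) * n k

theorem intersectionForm_antitone {e e' : V → ℕ} (h : e ≤ e') (x : V → ℝ) :
    intersectionForm w e' x ≤ intersectionForm w e x := by
  refine sum_le_sum fun j _ => ?_
  have : (e j : ℝ) ≤ e' j := by exact_mod_cast h j
  nlinarith [mul_le_mul_of_nonneg_right this (sq_nonneg (x j))]

theorem intersectionForm_smul (e : V → ℕ) (c : ℝ) (x : V → ℝ) :
    intersectionForm w e (c • x) = c ^ 2 * intersectionForm w e x := by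
  simp only [intersectionForm, Pi.smul_apply, smul_eq_mul, mul_sum, mul_add]
  refine sum_congr rfl fun j _ => ?_
  congr 1
  · ring
  · exact sum_congr rfl fun k _ => by ring

theorem continuous_intersectionForm (e : V → ℕ) : Continuous (intersectionForm w e) := by
  unfold intersectionForm
  fun_prop

theorem exists_intersectionForm_le_neg_mul_sq_norm {e : V → ℕ}
    (hneg : ∀ x : V → ℝ, x ≠ 0 → intersectionForm w e x < 0) :
    ∃ c > 0, ∀ x : V → ℝ, intersectionForm w e x ≤ -(c * ‖x‖ ^ 2) := by
  obtain ⟨c, hc, hle⟩ := exists_pos_mul_sq_norm_le (fun x => -intersectionForm w e x)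
    (continuous_intersectionForm w e).neg
    (fun c x => by rw [intersectionForm_smul]; ring) (fun x hx => neg_pos.mpr (hneg x hx))
  exact ⟨c, hc, fun x => le_neg_of_le_neg (hle x)⟩

theorem IsAdjunctionSolution.intersectionForm_eq {q : V → ℤ} {n e : V → ℕ}
    (hsol : IsAdjunctionSolution w q n e) :
    intersectionForm w e (fun j => n j) = -∑ j, q j * (n j : ℝ) := by
  rw [intersectionForm, ← sum_neg_distrib]
  refine sum_congr rfl fun j _ => ?_
  have hj : (e j : ℝ) * n j = q j + ∑ k ∈ univ.erase j, (w j k : ℝ) * n k := by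
    exact_mod_cast hsol j
  linear_combination -(n j : ℝ) * hj

theorem IsAdjunctionSolution.norm_le {q : V → ℤ} {f n e : V → ℕ} {c : ℝ} (hc : 0 < c)
    (hf : ∀ x : V → ℝ, intersectionForm w f x ≤ -(c * ‖x‖ ^ 2)) (hfe : f ≤ e)
    (hsol : IsAdjunctionSolution w q n e) :
    ‖fun j => (n j : ℝ)‖ ≤ (∑ j, |(q j : ℝ)|) / c := by
  set N : V → ℝ := fun j => n j
  have hN : 0 ≤ N := fun j => Nat.cast_nonneg _
  have hsq : ‖N‖ * (c * ‖N‖) ≤ ‖N‖ * ∑ j, |(q j : ℝ)| := by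
    have hmono := intersectionForm_antitone w hfe N
    have hlin := sum_mul_le_sum_abs_mul_norm (fun j => (q j : ℝ)) hN
    nlinarith [hf N, hsol.intersectionForm_eq w]
  rw [le_div_iff₀ hc]
  rcases (norm_nonneg N).eq_or_lt with h0 | h0
  · rw [← h0, zero_mul]
    exact sum_nonneg fun j _ => abs_nonneg _
  · nlinarith [le_of_mul_le_mul_left hsq h0]

theorem bddAbove_of_intersectionForm_le {q : V → ℤ} {f : V → ℕ} {c : ℝ} (hc : 0 < c)
    (hf : ∀ x : V → ℝ, intersectionForm w f x ≤ -(c * ‖x‖ ^ 2)) (i : V) :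
    BddAbove {m : ℕ | ∃ n e, IsAdjunctionSolution w q n e ∧ f ≤ e ∧ n i ≠ 0 ∧ e i = m} := by
  set B : ℝ := q i + (∑ k ∈ univ.erase i, (w i k : ℝ)) * ((∑ j, |(q j : ℝ)|) / c) with hB
  refine ⟨⌈B⌉₊, ?_⟩
  rintro _ ⟨n, e, hsol, hfe, hi, rfl⟩
  have hbound : ∀ k, (n k : ℝ) ≤ (∑ j, |(q j : ℝ)|) / c := fun k =>
    (le_abs_self _).trans ((norm_le_pi_norm (fun j => (n j : ℝ)) k).trans (hsol.norm_le w hc hf hfe))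
  have hei : (e i : ℝ) ≤ B := calc
    (e i : ℝ) ≤ e i * n i := le_mul_of_one_le_right (Nat.cast_nonneg _)
        (Nat.one_le_cast.mpr (Nat.one_le_iff_ne_zero.mpr hi))
    _ = q i + ∑ k ∈ univ.erase i, (w i k : ℝ) * n k := by exact_mod_cast hsol i
    _ ≤ B := by
      rw [hB, sum_mul]
      gcongr with k
      exact hbound k
  exact_mod_cast hei.trans (Nat.le_ceil B)

end AdjunctionSystem

theorem stmt_1_general {V : Type*} [Fintype V] [DecidableEq V]
    (w : V → V → ℕ)
    (q : V → ℤ) (i : V)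
    (h : ∀ n e : V → ℕ, (∀ j, 1 ≤ e j) →
      (∀ j, (e j : ℤ) * n j = q j + ∑ k ∈ univ.erase j, (w j k : ℤ) * n k) →
      (∀ x : V → ℝ, x ≠ 0 →
        ∑ j, x j * (-(e j : ℝ) * x j + ∑ k ∈ univ.erase j, (w j k : ℝ) * x k) < 0) →
      n i ≠ 0) :
    {m : ℕ | ∃ n e : V → ℕ, (∀ j, 1 ≤ e j) ∧
      (∀ j, (e j : ℤ) * n j = q j + ∑ k ∈ univ.erase j, (w j k : ℤ) * n k) ∧
      (∀ x : V → ℝ, x ≠ 0 →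
        ∑ j, x j * (-(e j : ℝ) * x j + ∑ k ∈ univ.erase j, (w j k : ℝ) * x k) < 0) ∧
      e i = m}.Finite := by
  obtain ⟨t, htE, ht, hcover⟩ := WellQuasiOrderedLE.exists_finite_subset_forall_exists_le
    {f : V → ℕ | ∃ n, IsAdjunctionSolution w q n f ∧ ∀ x ≠ 0, intersectionForm w f x < 0}
  have hbdd : ∀ f ∈ t,
      BddAbove {m : ℕ | ∃ n e, IsAdjunctionSolution w q n e ∧ f ≤ e ∧ n i ≠ 0 ∧ e i = m} := by
    intro f hf
    obtain ⟨-, -, hneg⟩ := htE hf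
    obtain ⟨c, hc, hle⟩ := exists_intersectionForm_le_neg_mul_sq_norm w hneg
    exact bddAbove_of_intersectionForm_le w hc hle i
  refine Set.finite_iff_bddAbove.mpr ((ht.bddAbove_biUnion.mpr hbdd).mono ?_)
  rintro _ ⟨n, e, he, hsol, hneg, rfl⟩
  obtain ⟨f, hft, hfe⟩ := hcover e ⟨n, hsol, hneg⟩
  exact Set.mem_biUnion hft ⟨n, e, hsol, hfe, h n e he hsol hneg, rfl⟩

/-- If a vertex `i` satisfies `n i ≠ 0` for every solution of the adjunction system
with negative definite intersection form, then `e i` takes only finitely many values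
among all such solutions. -/
theorem stmt_1 {V : Type*} [Fintype V] [DecidableEq V]
    (w : V → V → ℕ) (hsymm : ∀ i j, w i j = w j i) (hdiag : ∀ i, w i i = 0)
    (hconn : (SimpleGraph.fromRel (fun i j => 0 < w i j)).Connected)
    (q : V → ℤ) (i : V)
    (h : ∀ n e : V → ℕ, (∀ j, 1 ≤ e j) →
      (∀ j, (e j : ℤ) * n j = q j + ∑ k ∈ univ.erase j, (w j k : ℤ) * n k) →
      (∀ x : V → ℝ, x ≠ 0 →
        ∑ j, x j * (-(e j : ℝ) * x j + ∑ k ∈ univ.erase j, (w j k : ℝ) * x k) < 0) →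
      n i ≠ 0) :
    {m : ℕ | ∃ n e : V → ℕ, (∀ j, 1 ≤ e j) ∧
      (∀ j, (e j : ℤ) * n j = q j + ∑ k ∈ univ.erase j, (w j k : ℤ) * n k) ∧
      (∀ x : V → ℝ, x ≠ 0 →
        ∑ j, x j * (-(e j : ℝ) * x j + ∑ k ∈ univ.erase j, (w j k : ℝ) * x k) < 0) ∧
      e i = m}.Finite :=
  stmt_1_general w q i h
end

section
/- With the adjunction system e_i n_i = v_i + 2p_i − 2 + Σ_{j≠i} e_{ij} n_j: if a vertex i₀ has n_{i₀} = 0 and valency v_{i₀} = 2, then p_i = 0 and n_i = 0 for all vertices i, i.e. the graph is a cusp graph with trivial solution n ≡ 0. -/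
open Finset

/-- If `(n, e)` solves the adjunction system and some vertex `i₀` has `n i₀ = 0` and
valency `2`, then the graph is a cusp graph (every vertex has valency `2` and genus `0`)
and `n ≡ 0`. -/
theorem stmt_4 {V : Type*} [Fintype V] [DecidableEq V]
    (w : V → V → ℕ) (hsymm : ∀ i j, w i j = w j i) (hdiag : ∀ i, w i i = 0)
    (hconn : (SimpleGraph.fromRel (fun i j => 0 < w i j)).Connected)
    (p : V → ℕ) (n e : V → ℕ) (he : ∀ i, 1 ≤ e i)
    (hsol : ∀ i, (e i : ℤ) * n i =
      (∑ j ∈ univ.erase i, (w i j : ℤ)) + 2 * p i - 2 + ∑ j ∈ univ.erase i, (w i j : ℤ) * n j)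
    (i₀ : V) (hn : n i₀ = 0) (hv : (∑ j ∈ univ.erase i₀, w i₀ j) = 2) :
    ∀ i, p i = 0 ∧ n i = 0 ∧ (∑ j ∈ univ.erase i, w i j) = 2 := by
  -- the basic equation in ℕ at any vertex with n = 0
  have eqn : ∀ j, n j = 0 →
      (∑ k ∈ univ.erase j, w j k) + (∑ k ∈ univ.erase j, w j k * n k) + 2 * p j = 2 := by
    intro j hj
    have h := hsol j
    rw [hj] at h
    have h2 : ((∑ k ∈ univ.erase j, w j k) + (∑ k ∈ univ.erase j, w j k * n k)
        + 2 * p j : ℤ) = 2 := by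
      push_cast
      push_cast at h
      linarith
    exact_mod_cast h2
  have hne : ∀ {a b : V}, 0 < w a b → a ≠ b := by
    intro a b hw h
    rw [h, hdiag] at hw
    exact absurd hw (lt_irrefl 0)
  -- if n j = 0 and j has a neighbor i with n i = 0, then all neighbors of j have n = 0
  have Z : ∀ i j, n i = 0 → n j = 0 → 0 < w j i → ∀ k, 0 < w j k → n k = 0 := by
    intro i j hni hnj hw k hwk
    by_contra hk
    have hnk : 1 ≤ n k := Nat.one_le_iff_ne_zero.mpr hk
    have hij : i ≠ j := hne (hsymm j i ▸ hw)
    have hkj : k ≠ j := hne (hsymm j k ▸ hwk)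
    have hik : i ≠ k := by rintro rfl; rw [hni] at hnk; omega
    have hA : w j i + w j k ≤ ∑ x ∈ univ.erase j, w j x := by
      calc w j i + w j k = ∑ x ∈ ({i, k} : Finset V), w j x := by
            rw [Finset.sum_pair hik]
        _ ≤ ∑ x ∈ univ.erase j, w j x := by
            apply Finset.sum_le_sum_of_subset
            intro x hx
            simp only [Finset.mem_insert, Finset.mem_singleton] at hx
            rcases hx with rfl | rfl <;> simp [hij, hkj]
    have hB : w j k * n k ≤ ∑ x ∈ univ.erase j, w j x * n x := by
      apply Finset.single_le_sum (f := fun x => w j x * n x) (fun x _ => Nat.zero_le _)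
      simp [hkj]
    have := eqn j hnj
    have h1 : 1 ≤ w j k * n k := Nat.one_le_iff_ne_zero.mpr (by positivity)
    omega
  -- and moreover p j = 0 and valency 2
  have Vl : ∀ i j, n i = 0 → n j = 0 → 0 < w j i →
      p j = 0 ∧ (∑ k ∈ univ.erase j, w j k) = 2 := by
    intro i j hni hnj hw
    have hz := Z i j hni hnj hw
    have hB : (∑ x ∈ univ.erase j, w j x * n x) = 0 := by
      apply Finset.sum_eq_zero
      intro x _
      rcases Nat.eq_zero_or_pos (w j x) with h | h
      · simp [h]
      · simp [hz x h]
    have hA : w j i ≤ ∑ x ∈ univ.erase j, w j x := by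
      apply Finset.single_le_sum (fun x _ => Nat.zero_le _)
      simp [hne (hsymm j i ▸ hw)]
    have := eqn j hnj
    omega
  -- base: all neighbors of i₀ have n = 0
  have base : ∀ k, 0 < w i₀ k → n k = 0 := by
    have h := eqn i₀ hn
    rw [hv] at h
    have hB : (∑ x ∈ univ.erase i₀, w i₀ x * n x) = 0 := by omega
    intro k hwk
    have hk : k ∈ univ.erase i₀ := by simp [(hne hwk).symm]
    have := (Finset.sum_eq_zero_iff.mp hB) k hk
    rcases Nat.mul_eq_zero.mp this with h | h
    · omega
    · exact h
  -- Q: vertex and all its neighbors are zero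
  set Q : V → Prop := fun i => n i = 0 ∧ ∀ k, 0 < w i k → n k = 0 with hQ
  have Qstep : ∀ a b, Q a → 0 < w a b → Q b := by
    intro a b ⟨ha, hnb⟩ hw
    have hb : n b = 0 := hnb b hw
    have hwb : 0 < w b a := by rw [hsymm b a]; exact hw
    exact ⟨hb, Z a b ha hb hwb⟩
  have adjw : ∀ {a b : V},
      (SimpleGraph.fromRel (fun i j => 0 < w i j)).Adj a b → 0 < w a b := by
    intro a b hab
    rw [SimpleGraph.fromRel_adj] at hab
    rcases hab.2 with h | h
    · exact h
    · rw [hsymm a b]; exact h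
  have Qall : ∀ i, Q i := by
    have key : ∀ a b : V, (SimpleGraph.fromRel (fun i j => 0 < w i j)).Walk a b →
        Q a → Q b := by
      intro a b wk
      induction wk with
      | nil => exact id
      | cons h _ ih => intro hQa; exact ih (Qstep _ _ hQa (adjw h))
    intro i
    obtain ⟨wk⟩ := hconn.preconnected i₀ i
    exact key i₀ i wk ⟨hn, base⟩
  intro i
  rcases eq_or_ne i i₀ with rfl | hnei
  · exact ⟨by have := eqn i hn; omega, hn, hv⟩
  · obtain ⟨wk⟩ := hconn.preconnected i i₀
    cases wk with
    | nil => exact absurd rfl hnei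
    | @cons _ c _ h rest =>
      have hw : 0 < w i c := adjw h
      have hQc := Qall c
      have hQi := Qall i
      have := Vl c i hQc.1 hQi.1 hw
      exact ⟨this.1, hQi.1, this.2⟩
end

section
/- Let M be a symmetric negative definite real matrix indexed by a finite set V with M_{ij} ≥ 0 for all i ≠ j, and let K ∈ ℝ^V. Then there is a unique vector z ∈ ℝ^V with (Mz)_i = K_i for all i; moreover if K_i ≤ 0 for all i, then z_i ≥ 0 for all i. -/
open Matrix

/-- For a symmetric negative definite real matrix `M` with non-negative off-diagonal
entries and any `K`, there is a unique `z` with `M z = K`; moreover if `K ≤ 0`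
componentwise then `z ≥ 0` componentwise. -/
theorem stmt_11 {V : Type*} [Fintype V] [DecidableEq V]
    (M : Matrix V V ℝ) (hsym : M.IsSymm)
    (hneg : ∀ x : V → ℝ, x ≠ 0 → x ⬝ᵥ M.mulVec x < 0)
    (hoff : ∀ i j, i ≠ j → 0 ≤ M i j)
    (K : V → ℝ) :
    (∃! z : V → ℝ, M.mulVec z = K) ∧
    (∀ z : V → ℝ, M.mulVec z = K → (∀ i, K i ≤ 0) → ∀ i, 0 ≤ z i) := by
  have hinj : Function.Injective (M.mulVecLin) := by
    rw [injective_iff_map_eq_zero]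
    intro d hd
    by_contra hne
    have := hneg d hne
    rw [show M.mulVec d = 0 from hd] at this
    simp at this
  constructor
  · have hsurj : Function.Surjective (M.mulVecLin) :=
      (LinearMap.injective_iff_surjective).mp hinj
    obtain ⟨z, hz⟩ := hsurj K
    exact ⟨z, hz, fun y hy => hinj (by simp only [mulVecLin_apply] at hz ⊢; rw [hy, ← hz])⟩
  · intro z hz hK
    classical
    set x : V → ℝ := fun i => if z i < 0 then z i else 0 with hx
    have hx0 : x = 0 := by
      by_contra hne
      have hlt := hneg x hne
      have hge : 0 ≤ x ⬝ᵥ M.mulVec x := by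
        rw [dotProduct]
        apply Finset.sum_nonneg
        intro i _
        by_cases hi : z i < 0
        · have hxi : x i = z i := by simp [hx, hi]
          -- (M x) i ≤ K i ≤ 0
          have hMx : M.mulVec x i ≤ 0 := by
            have hdiff : 0 ≤ ∑ j, M i j * (z j - x j) := by
              apply Finset.sum_nonneg
              intro j _
              by_cases hji : j = i
              · subst hji
                simp [hx, hi]
              · have h1 : 0 ≤ M i j := hoff i j (Ne.symm hji)
                have h2 : 0 ≤ z j - x j := by
                  by_cases hj : z j < 0 <;> simp [hx, hj] <;> linarith
                exact mul_nonneg h1 h2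
            have hexp : M.mulVec z i - M.mulVec x i = ∑ j, M i j * (z j - x j) := by
              simp [mulVec, dotProduct, mul_sub, Finset.sum_sub_distrib]
            have := hK i
            rw [hz] at hexp
            linarith
          have hxineg : x i ≤ 0 := by rw [hxi]; linarith
          nlinarith [hxineg, hMx]
        · simp [hx, hi]
      linarith
    intro i
    by_contra h
    push_neg at h
    have : x i = z i := by simp [hx, h]
    rw [hx0] at this
    simp at this
    linarith
end

section
/- Let M be a symmetric negative definite matrix indexed by a finite set V, with M_{ij} ≥ 0 for i ≠ j, such that the associated graph (edges where M_{ij} > 0) is connected. Let z ∈ ℝ^V with z ≥ 0 solve (Mz)_i = K_i with K_i ≤ 0 for all i. If z_{i₀} = 0 for some i₀ and K_{i₀} < 0, a contradiction arises; more precisely: if z_i = 0 for some i, then K_i = 0 and z_j = 0 for all neighbors j of i; by connectedness z ≡ 0 and K ≡ 0. -/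
open Matrix

/-- `M` symmetric negative definite with non-negative off-diagonal entries and connected
associated graph; `z ≥ 0` solves `M z = K` with `K ≤ 0`. If `z i = 0` for some `i`, then
`K i = 0` and `z j = 0` for all neighbors `j` of `i`; by connectedness `z ≡ 0` and
`K ≡ 0`. -/
theorem stmt_12 {V : Type*} [Fintype V] [DecidableEq V]
    (M : Matrix V V ℝ) (hsym : M.IsSymm)
    (hneg : ∀ x : V → ℝ, x ≠ 0 → x ⬝ᵥ M.mulVec x < 0)
    (hoff : ∀ i j, i ≠ j → 0 ≤ M i j)
    (hconn : (SimpleGraph.fromRel (fun i j => 0 < M i j)).Connected)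
    (z K : V → ℝ) (hz : ∀ i, 0 ≤ z i) (hMz : M.mulVec z = K) (hK : ∀ i, K i ≤ 0) :
    (∀ i, z i = 0 → K i = 0 ∧ ∀ j, j ≠ i → 0 < M i j → z j = 0) ∧
    ((∃ i, z i = 0) → (∀ i, z i = 0) ∧ (∀ i, K i = 0)) := by
  have key : ∀ i, z i = 0 → K i = 0 ∧ ∀ j, j ≠ i → 0 < M i j → z j = 0 := by
    intro i hzi
    have hKi : K i = ∑ j, M i j * z j := by
      rw [← hMz]; rfl
    have hterm : ∀ j ∈ Finset.univ, 0 ≤ M i j * z j := by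
      intro j _
      by_cases h : j = i
      · subst h; simp [hzi]
      · exact mul_nonneg (hoff i j (Ne.symm h)) (hz j)
    have hK0 : K i = 0 := le_antisymm (hK i)
      (hKi ▸ Finset.sum_nonneg hterm)
    have hall : ∀ j ∈ Finset.univ, M i j * z j = 0 :=
      (Finset.sum_eq_zero_iff_of_nonneg hterm).mp (by rw [← hKi, hK0])
    refine ⟨hK0, fun j hji hMij => ?_⟩
    have := hall j (Finset.mem_univ j)
    rcases mul_eq_zero.mp this with h | h
    · exact absurd h (ne_of_gt hMij)
    · exact h
  refine ⟨key, fun ⟨i0, hi0⟩ => ?_⟩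
  have adj : ∀ a b, z a = 0 →
      (SimpleGraph.fromRel (fun i j => 0 < M i j)).Adj a b → z b = 0 := by
    intro a b hza hab
    rcases hab with ⟨hne, h | h⟩
    · exact (key a hza).2 b (Ne.symm hne) h
    · exact (key a hza).2 b (Ne.symm hne) (by rwa [hsym.apply] at h)
  have hzall : ∀ i, z i = 0 := by
    intro i
    obtain ⟨w⟩ := hconn.preconnected i0 i
    induction w with
    | nil => exact hi0
    | cons h p ih => exact ih (adj _ _ hi0 h)
  exact ⟨hzall, fun i => (key i (hzall i)).1⟩
end

section
/- Suppose (n^{(k)}, e^{(k)}) is a sequence of solutions of the system e_i n_i = q_i + Σ_{j≠i} e_{ij} n_j (q : V → ℤ fixed, V finite) with all Q_{(Γ, e^{(k)})} negative definite, and suppose there is a vertex i₀ with n^{(k)}_{i₀} = max_i n^{(k)}_i → ∞ and for each i the ratio n^{(k)}_i / n^{(k)}_{i₀} converges to some ν_i ∈ [0,1]. Let P = {i : ν_i > 0} and let Γ' be the connected component of the subgraph spanned by P containing i₀. Then for each i ∈ Γ' the sequence e^{(k)}_i converges (hence is eventually constant, being integer-valued) to ε_i = (1/ν_i) Σ_{j∈Γ',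 j↔i} e_{ij} ν_j. -/
open Finset Filter Topology
open scoped Classical

/-!
Dividing the equation `e_i n_i = q_i + ∑_j e_{ij} n_j` by `n_{i₀} → ∞` shows that `e_i` times
`n_i / n_{i₀} → ν_i` tends to `∑_j e_{ij} ν_j`; for `ν_i > 0` this gives `e_i → ν_i⁻¹ ∑_j e_{ij} ν_j`.
Every vertex of `Γ'` has `ν_i > 0`, and a neighbour `j` of `i ∈ Γ'` contributes to the sum only if
`e_{ij} ν_j > 0`, in which case `j ∈ Γ'` as well.
-/

theorem Filter.Tendsto.of_mul_eq_of_div {ι 𝕜 : Type*} [Field 𝕜] [TopologicalSpace 𝕜]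
    [T1Space 𝕜] [ContinuousMul 𝕜] [ContinuousInv₀ 𝕜] {l : Filter ι} {x a b c : ι → 𝕜}
    {α β : 𝕜} (hc : ∀ᶠ k in l, c k ≠ 0) (ha : Tendsto (fun k => a k / c k) l (𝓝 α))
    (hb : Tendsto (fun k => b k / c k) l (𝓝 β)) (hβ : β ≠ 0) (hx : ∀ k, x k * b k = a k) :
    Tendsto x l (𝓝 (α / β)) := by
  refine (ha.div hb hβ).congr' ?_
  filter_upwards [hc, hb.eventually_ne hβ] with k hck hbk
  have hbk' : b k ≠ 0 := fun h => hbk (by rw [h, zero_div])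
  rw [Pi.div_apply, div_div_div_cancel_right₀ hck, ← hx, mul_div_cancel_right₀ _ hbk']

theorem tendsto_add_sum_mul_div_atTop {ι V : Type*} {l : Filter ι} {N : ι → ℝ}
    (hN : Tendsto N l atTop) {n : ι → V → ℝ} {ν : V → ℝ}
    (hn : ∀ j, Tendsto (fun k => n k j / N k) l (𝓝 (ν j))) (q : ℝ) (w : V → ℝ) (s : Finset V) :
    Tendsto (fun k => (q + ∑ j ∈ s, w j * n k j) / N k) l (𝓝 (∑ j ∈ s, w j * ν j)) := by
  have hlim : Tendsto (fun k => q / N k + ∑ j ∈ s, w j * (n k j / N k)) l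
      (𝓝 (0 + ∑ j ∈ s, w j * ν j)) :=
    (tendsto_const_nhds.div_atTop hN).add (tendsto_finsetSum _ fun j _ => (hn j).const_mul _)
  rw [zero_add] at hlim
  refine hlim.congr fun k => ?_
  simp only [add_div, sum_div, mul_div_assoc]

section SupportGraph

variable {V : Type*} (w : V → V → ℕ) (ν : V → ℝ)

def supportGraph : SimpleGraph V :=
  SimpleGraph.fromRel fun a b => 0 < w a b ∧ 0 < ν a ∧ 0 < ν b

variable {w ν}

theorem pos_of_supportGraph_adj {a b : V} (h : (supportGraph w ν).Adj a b) : 0 < ν a := by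
  rcases (SimpleGraph.fromRel_adj _ a b).1 h with ⟨-, ⟨-, ha, -⟩ | ⟨-, -, ha⟩⟩ <;> exact ha

theorem pos_of_supportGraph_reachable {a b : V} (h : (supportGraph w ν).Reachable a b)
    (ha : 0 < ν a) : 0 < ν b := by
  obtain ⟨p⟩ := h.symm
  cases p with
  | nil => exact ha
  | cons hadj _ => exact pos_of_supportGraph_adj hadj

theorem mul_eq_zero_of_not_supportGraph_reachable {i₀ i j : V} (hν : ∀ j, 0 ≤ ν j)
    (hνi : 0 < ν i) (hi : (supportGraph w ν).Reachable i₀ i)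
    (hj : ¬(supportGraph w ν).Reachable i₀ j) : (w i j : ℝ) * ν j = 0 := by
  have hij : i ≠ j := by rintro rfl; exact hj hi
  have hzero : w i j = 0 ∨ ν j = 0 := by
    by_contra! h
    have hadj : (supportGraph w ν).Adj i j := (SimpleGraph.fromRel_adj _ _ _).2
      ⟨hij, Or.inl ⟨Nat.pos_of_ne_zero h.1, hνi, (hν j).lt_of_ne' h.2⟩⟩
    exact hj (hi.trans hadj.reachable)
  rcases hzero with h | h <;> simp [h]

end SupportGraph

theorem stmt_18_general {V : Type*} [Fintype V] [DecidableEq V]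
    (w : V → V → ℕ)
    (q : V → ℤ)
    (n e : ℕ → V → ℕ)
    (hsol : ∀ k i, (e k i : ℤ) * n k i = q i + ∑ j ∈ univ.erase i, (w i j : ℤ) * n k j)
    (i₀ : V)
    (htop : Tendsto (fun k => (n k i₀ : ℝ)) atTop atTop)
    (ν : V → ℝ) (hν : ∀ i, ν i ∈ Set.Icc (0 : ℝ) 1)
    (hlim : ∀ i, Tendsto (fun k => (n k i : ℝ) / (n k i₀ : ℝ)) atTop (nhds (ν i))) :
    ∀ i, (SimpleGraph.fromRel (fun a b => 0 < w a b ∧ 0 < ν a ∧ 0 < ν b)).Reachable i₀ i →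
      Tendsto (fun k => (e k i : ℝ)) atTop
        (nhds ((1 / ν i) * ∑ j ∈ univ.erase i,
          if (SimpleGraph.fromRel (fun a b => 0 < w a b ∧ 0 < ν a ∧ 0 < ν b)).Reachable i₀ j
          then (w i j : ℝ) * ν j else 0)) := by
  intro i hi
  have hν₀ : ν i₀ = 1 := by
    refine tendsto_nhds_unique (hlim i₀) (tendsto_const_nhds.congr' ?_)
    filter_upwards [htop.eventually_ne_atTop 0] with k hk
    exact (div_self hk).symm
  have hνi : 0 < ν i := pos_of_supportGraph_reachable hi (hν₀ ▸ one_pos)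
  have hsum := tendsto_add_sum_mul_div_atTop htop hlim (q i) (fun j => (w i j : ℝ)) (univ.erase i)
  have he := hsum.of_mul_eq_of_div (x := fun k => (e k i : ℝ)) (htop.eventually_ne_atTop 0)
    (hlim i) hνi.ne' fun k => by exact_mod_cast hsol k i
  rw [one_div_mul_eq_div]
  convert he using 3
  exact sum_congr rfl fun j _ => ite_eq_left_iff.2 fun hj =>
    (mul_eq_zero_of_not_supportGraph_reachable (fun j => (hν j).1) hνi hi hj).symm

/-- Convergence of self-intersections along an unbounded sequence of solutions: if
`(n^{(k)}, e^{(k)})` are solutions of the adjunction system with negative definite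
intersection forms, `n^{(k)} i₀` is maximal and tends to infinity, and the ratios
`n^{(k)} i / n^{(k)} i₀` converge to `ν i ∈ [0,1]`, then for every `i` in the connected
component `Γ'` containing `i₀` of the subgraph spanned by `P = {i | ν i > 0}`, the
sequence `e^{(k)} i` converges to `(1 / ν i) * ∑_{j ∈ Γ', j ↔ i} w i j * ν j`. -/
theorem stmt_18 {V : Type*} [Fintype V] [DecidableEq V]
    (w : V → V → ℕ) (hsymm : ∀ i j, w i j = w j i) (hdiag : ∀ i, w i i = 0)
    (q : V → ℤ)
    (n e : ℕ → V → ℕ) (he : ∀ k i, 1 ≤ e k i)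
    (hsol : ∀ k i, (e k i : ℤ) * n k i = q i + ∑ j ∈ univ.erase i, (w i j : ℤ) * n k j)
    (hneg : ∀ k, ∀ x : V → ℝ, x ≠ 0 →
      ∑ i, x i * (-(e k i : ℝ) * x i + ∑ j ∈ univ.erase i, (w i j : ℝ) * x j) < 0)
    (i₀ : V) (hmax : ∀ k i, n k i ≤ n k i₀)
    (htop : Tendsto (fun k => (n k i₀ : ℝ)) atTop atTop)
    (ν : V → ℝ) (hν : ∀ i, ν i ∈ Set.Icc (0 : ℝ) 1)
    (hlim : ∀ i, Tendsto (fun k => (n k i : ℝ) / (n k i₀ : ℝ)) atTop (nhds (ν i))) :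
    ∀ i, (SimpleGraph.fromRel (fun a b => 0 < w a b ∧ 0 < ν a ∧ 0 < ν b)).Reachable i₀ i →
      Tendsto (fun k => (e k i : ℝ)) atTop
        (nhds ((1 / ν i) * ∑ j ∈ univ.erase i,
          if (SimpleGraph.fromRel (fun a b => 0 < w a b ∧ 0 < ν a ∧ 0 < ν b)).Reachable i₀ j
          then (w i j : ℝ) * ν j else 0)) :=
  stmt_18_general w q n e hsol i₀ htop ν hν hlim
end
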